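/- The map x defined by x(s,u) := √(s²+c²) • Y(s,u) is a smooth immersion of U = I × V into ℝᵐ which is proper rectifying: for every p ∈ U its derivative is injective; ⟪x(p), h_p(X,Y')⟫ = 0 for all X, Y' ∈ ℝⁿ, where h_p is the normal component of the second derivative of x at p; and both the tangential component P_p(x(p)) and the normal component x(p) − P_p(x(p)) of the position vector are nonzero at every p (here P_p denotes the orthogonal projection of ℝᵐ onto the tangent space range(fderiv ℝ x p)). (Converse part of Theorem 4.2: the immersion (4.6) with metric condition (4.7) defines a proper rectifying submanifold.) -/

import Mathlib

open scoped RealInnerProductSpace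

/-- Partial derivative in the first (`s`) coordinate direction of `ℝ × ℝᵏ`. -/
noncomputable def pds {k m : ℕ}
    (x : ℝ × EuclideanSpace ℝ (Fin k) → EuclideanSpace ℝ (Fin m))
    (p : ℝ × EuclideanSpace ℝ (Fin k)) : EuclideanSpace ℝ (Fin m) :=
  fderiv ℝ x p (1, 0)

/-- Partial derivative in the `j`-th coordinate direction of the second factor of
`ℝ × ℝᵏ`. -/
noncomputable def pdu {k m : ℕ}
    (x : ℝ × EuclideanSpace ℝ (Fin k) → EuclideanSpace ℝ (Fin m))
    (j : Fin k) (p : ℝ × EuclideanSpace ℝ (Fin k)) : EuclideanSpace ℝ (Fin m) :=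
  fderiv ℝ x p (0, EuclideanSpace.single j 1)

/-- Orthogonal projection of `v` onto the tangent space `range (fderiv ℝ x p)`. -/
noncomputable def tangentProjP {k m : ℕ}
    (x : ℝ × EuclideanSpace ℝ (Fin k) → EuclideanSpace ℝ (Fin m))
    (p : ℝ × EuclideanSpace ℝ (Fin k)) (v : EuclideanSpace ℝ (Fin m)) :
    EuclideanSpace ℝ (Fin m) :=
  (Submodule.orthogonalProjectionOnto (LinearMap.range (fderiv ℝ x p : ℝ × EuclideanSpace ℝ (Fin k) →ₗ[ℝ] EuclideanSpace ℝ (Fin m))) v : EuclideanSpace ℝ (Fin m))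

/-- Second fundamental form of `x` at `p`: normal component of the second derivative. -/
noncomputable def sffP {k m : ℕ}
    (x : ℝ × EuclideanSpace ℝ (Fin k) → EuclideanSpace ℝ (Fin m))
    (p X Y : ℝ × EuclideanSpace ℝ (Fin k)) : EuclideanSpace ℝ (Fin m) :=
  fderiv ℝ (fderiv ℝ x) p X Y - tangentProjP x p (fderiv ℝ (fderiv ℝ x) p X Y)

/-- The map `x(s,u) = √(s² + c²) • Y(s,u)` of Theorem 4.2. -/
noncomputable def xMap {k m : ℕ} (c : ℝ)
    (Y : ℝ × EuclideanSpace ℝ (Fin k) → EuclideanSpace ℝ (Fin m))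
    (p : ℝ × EuclideanSpace ℝ (Fin k)) : EuclideanSpace ℝ (Fin m) :=
  Real.sqrt (p.1 ^ 2 + c ^ 2) • Y p

lemma scalar_met_aux (s c t S W X : ℝ) (ht : t ≠ 0) (ht2 : t * t = s ^ 2 + c ^ 2) :
    s / t * X * (s / t * W)
      + t * (t * (W * X * (c ^ 2 / (s ^ 2 + c ^ 2) ^ 2) + s ^ 2 / (s ^ 2 + c ^ 2) * S))
      = W * X + s ^ 2 * S := by
  rw [← ht2]
  field_simp
  linear_combination (-(X * W)) * ht2

/-- evaluation of derivative of a CLM-valued map -/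
lemma fderiv_eval_aux {k m : ℕ} (f : ℝ × EuclideanSpace ℝ (Fin k) → EuclideanSpace ℝ (Fin m))
    (p X W : ℝ × EuclideanSpace ℝ (Fin k))
    (hf : DifferentiableAt ℝ (fderiv ℝ f) p) :
    fderiv ℝ (fun q => fderiv ℝ f q W) p X = fderiv ℝ (fderiv ℝ f) p X W := by
  rw [fderiv_clm_apply hf (differentiableAt_const W)]
  simp

lemma euclid_decomp_aux {k : ℕ} (v : EuclideanSpace ℝ (Fin k)) :
    v = ∑ j, v j • EuclideanSpace.single j 1 := by
  have := (EuclideanSpace.basisFun (Fin k) ℝ).sum_repr v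
  simpa using this.symm

set_option maxHeartbeats 2000000 in
/-- **Converse part of Theorem 4.2.** With `Y : U → S^{m-1}` satisfying the metric
conditions (4.25), the map `x(s,u) = √(s²+c²) • Y(s,u)` is a smooth immersion of
`U = I × V` which is a proper rectifying submanifold: its derivative is injective,
`⟪x p, h_p(X,X')⟫ = 0` for all `X, X'`, and both the tangential and the normal
components of the position vector are nonzero everywhere. -/
theorem stmt_13 {n m : ℕ} (hn : 2 ≤ n) (hnm : n < m)
    (c : ℝ) (hc : 0 < c) (a b : ℝ) (ha : 0 ≤ a)
    (V : Set (EuclideanSpace ℝ (Fin (n - 1)))) (hV : IsOpen V) (hVconn : IsConnected V)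
    (Y : ℝ × EuclideanSpace ℝ (Fin (n - 1)) → EuclideanSpace ℝ (Fin m))
    (hYs : ContDiffOn ℝ (⊤ : ℕ∞) Y (Set.Ioo a b ×ˢ V))
    (hY1 : ∀ p ∈ Set.Ioo a b ×ˢ V, ⟪Y p, Y p⟫ = 1)
    (hYss : ∀ p ∈ Set.Ioo a b ×ˢ V,
      ⟪pds Y p, pds Y p⟫ = c ^ 2 / (p.1 ^ 2 + c ^ 2) ^ 2)
    (hYsu : ∀ p ∈ Set.Ioo a b ×ˢ V, ∀ j : Fin (n - 1), ⟪pds Y p, pdu Y j p⟫ = 0)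
    (g : Fin (n - 1) → Fin (n - 1) → EuclideanSpace ℝ (Fin (n - 1)) → ℝ)
    (hg : ∀ i j, ContDiffOn ℝ (⊤ : ℕ∞) (g i j) V)
    (hYuu : ∀ p ∈ Set.Ioo a b ×ˢ V, ∀ i j : Fin (n - 1),
      ⟪pdu Y i p, pdu Y j p⟫ = (p.1 ^ 2 / (p.1 ^ 2 + c ^ 2)) * g i j p.2)
    (hind : ∀ p ∈ Set.Ioo a b ×ˢ V,
      LinearIndependent ℝ (fun j : Fin (n - 1) => pdu Y j p)) :
    ContDiffOn ℝ (⊤ : ℕ∞) (xMap c Y) (Set.Ioo a b ×ˢ V) ∧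
    (∀ p ∈ Set.Ioo a b ×ˢ V, Function.Injective (fderiv ℝ (xMap c Y) p)) ∧
    (∀ p ∈ Set.Ioo a b ×ˢ V, ∀ X X' : ℝ × EuclideanSpace ℝ (Fin (n - 1)),
      ⟪xMap c Y p, sffP (xMap c Y) p X X'⟫ = 0) ∧
    (∀ p ∈ Set.Ioo a b ×ˢ V,
      tangentProjP (xMap c Y) p (xMap c Y p) ≠ 0 ∧
      xMap c Y p - tangentProjP (xMap c Y) p (xMap c Y p) ≠ 0) := by
  set U : Set (ℝ × EuclideanSpace ℝ (Fin (n - 1))) := Set.Ioo a b ×ˢ V with hUdef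
  set x : ℝ × EuclideanSpace ℝ (Fin (n - 1)) → EuclideanSpace ℝ (Fin m) := xMap c Y with hxdef
  have hU : IsOpen U := isOpen_Ioo.prod hV
  have hden : ∀ s : ℝ, 0 < s ^ 2 + c ^ 2 := fun s => by positivity
  set r : ℝ × EuclideanSpace ℝ (Fin (n - 1)) → ℝ := fun q => Real.sqrt (q.1 ^ 2 + c ^ 2)
    with hrdef
  have hrpos : ∀ q, 0 < r q := fun q => Real.sqrt_pos.2 (hden q.1)
  have hrsq : ∀ q, r q ^ 2 = q.1 ^ 2 + c ^ 2 := fun q => Real.sq_sqrt (hden q.1).le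
  have hspos : ∀ q ∈ U, 0 < q.1 := fun q hq => lt_of_le_of_lt ha hq.1.1
  -- smoothness of r and x
  have hrC : ContDiff ℝ (⊤ : ℕ∞) r := by
    rw [contDiff_iff_contDiffAt]
    intro q
    have h : (q.1 ^ 2 + c ^ 2) ≠ 0 := (hden q.1).ne'
    exact (Real.contDiffAt_sqrt h).comp q ((contDiff_fst.pow 2).add contDiff_const).contDiffAt
  have hxC : ContDiffOn ℝ (⊤ : ℕ∞) x U := hrC.contDiffOn.smul hYs
  have hYd : ∀ q ∈ U, DifferentiableAt ℝ Y q := fun q hq =>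
    (hYs.contDiffAt (hU.mem_nhds hq)).differentiableAt (by simp)
  -- derivative of x
  have hxD : ∀ q ∈ U, HasFDerivAt x
      (r q • fderiv ℝ Y q +
        ((q.1 / r q) • ContinuousLinearMap.fst ℝ ℝ _).smulRight (Y q)) q := by
    intro q hq
    have hrD : HasFDerivAt r ((q.1 / r q) • ContinuousLinearMap.fst ℝ ℝ _) q := by
      have h : (q.1 ^ 2 + c ^ 2) ≠ 0 := (hden q.1).ne'
      have hw : HasFDerivAt (fun q : ℝ × EuclideanSpace ℝ (Fin (n-1)) => q.1 ^ 2 + c ^ 2)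
          ((2 * q.1) • ContinuousLinearMap.fst ℝ ℝ _) q := by
        have h2 : HasFDerivAt (fun q : ℝ × EuclideanSpace ℝ (Fin (n-1)) => q.1 * q.1 + c ^ 2)
            (q.1 • ContinuousLinearMap.fst ℝ ℝ _ + q.1 • ContinuousLinearMap.fst ℝ ℝ _) q :=
          (hasFDerivAt_fst.mul hasFDerivAt_fst).add_const _
        rw [show (fun q : ℝ × EuclideanSpace ℝ (Fin (n-1)) => q.1 ^ 2 + c ^ 2)
            = (fun q => q.1 * q.1 + c ^ 2) from by funext q; ring,
          show ((2 * q.1) • ContinuousLinearMap.fst ℝ ℝ (EuclideanSpace ℝ (Fin (n-1))))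
            = q.1 • ContinuousLinearMap.fst ℝ ℝ _ + q.1 • ContinuousLinearMap.fst ℝ ℝ _ from by
              rw [two_mul, add_smul]]
        exact h2
      have h3 := (Real.hasDerivAt_sqrt h).comp_hasFDerivAt q hw
      rw [show ((q.1 / r q) • ContinuousLinearMap.fst ℝ ℝ (EuclideanSpace ℝ (Fin (n-1))))
          = (1 / (2 * Real.sqrt (q.1 ^ 2 + c ^ 2))) • (2 * q.1) • ContinuousLinearMap.fst ℝ ℝ _ from by
        rw [smul_smul]; congr 1
        have hne : Real.sqrt (q.1 ^ 2 + c ^ 2) ≠ 0 := (hrpos q).ne'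
        rw [hrdef]; field_simp]
      exact h3
    exact hrD.smul (hYd q hq).hasFDerivAt
  have hDx : ∀ q ∈ U, ∀ X, fderiv ℝ x q X
      = ((q.1 / r q) * X.1) • Y q + r q • fderiv ℝ Y q X := by
    intro q hq X
    rw [(hxD q hq).fderiv]
    simp [add_comm]
  -- tangency of derivative of Y to the sphere
  have hYY' : ∀ q ∈ U, ∀ X, ⟪Y q, fderiv ℝ Y q X⟫ = 0 := by
    intro q hq X
    have hev : (fun q => ⟪Y q, Y q⟫) =ᶠ[nhds q] fun _ => (1:ℝ) :=
      Filter.eventuallyEq_of_mem (hU.mem_nhds hq) hY1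
    have h0 : fderiv ℝ (fun q => ⟪Y q, Y q⟫) q = 0 := by
      rw [hev.fderiv_eq]; exact fderiv_const_apply 1
    have h1 := fderiv_inner_apply (𝕜 := ℝ) (hYd q hq) (hYd q hq) X
    rw [h0] at h1
    simp only [ContinuousLinearMap.zero_apply] at h1
    have h2 := real_inner_comm (fderiv ℝ Y q X) (Y q)
    linarith [h1, h2]
  have hdecomp : ∀ q ∈ U, ∀ X : ℝ × EuclideanSpace ℝ (Fin (n - 1)),
      fderiv ℝ Y q X = X.1 • pds Y q + ∑ j, X.2 j • pdu Y j q := by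
    intro q hq X
    have hX : X = X.1 • ((1:ℝ), (0 : EuclideanSpace ℝ (Fin (n-1))))
        + ∑ j, X.2 j • ((0:ℝ), EuclideanSpace.single j 1) := by
      refine Prod.ext ?_ ?_
      · simp [Prod.fst_sum]
      · simp [Prod.snd_sum]
        exact euclid_decomp_aux X.2
    conv_lhs => rw [hX]
    rw [map_add, map_smul, map_sum]
    simp only [map_smul]
    rfl
  -- the metric formula
  have hMet : ∀ q ∈ U, ∀ W X' : ℝ × EuclideanSpace ℝ (Fin (n - 1)),
      ⟪fderiv ℝ x q W, fderiv ℝ x q X'⟫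
        = W.1 * X'.1 + q.1 ^ 2 * ∑ i, ∑ j, g i j q.2 * W.2 i * X'.2 j := by
    intro q hq W X'
    have hYs0 : ⟪Y q, pds Y q⟫ = 0 := hYY' q hq (1, 0)
    have hYu0 : ∀ j, ⟪Y q, pdu Y j q⟫ = 0 := fun j => hYY' q hq _
    have hYs0' : ⟪pds Y q, Y q⟫ = 0 := by rw [real_inner_comm]; exact hYs0
    have hYu0' : ∀ j, ⟪pdu Y j q, Y q⟫ = 0 := fun j => by rw [real_inner_comm]; exact hYu0 j
    have hsu' : ∀ j, ⟪pdu Y j q, pds Y q⟫ = 0 := fun j => by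
      rw [real_inner_comm]; exact hYsu q hq j
    have hDY : ⟪fderiv ℝ Y q W, fderiv ℝ Y q X'⟫
        = W.1 * X'.1 * (c ^ 2 / (q.1 ^ 2 + c ^ 2) ^ 2)
          + (q.1 ^ 2 / (q.1 ^ 2 + c ^ 2)) * ∑ i, ∑ j, g i j q.2 * W.2 i * X'.2 j := by
      rw [hdecomp q hq W, hdecomp q hq X']
      simp only [inner_add_left, inner_add_right, real_inner_smul_left, real_inner_smul_right,
        sum_inner, inner_sum, hYss q hq, hYsu q hq, hsu', hYuu q hq,
        mul_zero, zero_mul, Finset.sum_const_zero, add_zero, zero_add]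
      refine congrArg₂ (· + ·) (by ring) ?_
      conv_rhs => rw [Finset.mul_sum]
      rw [Finset.sum_comm]
      refine Finset.sum_congr rfl fun i _ => ?_
      conv_rhs => rw [Finset.mul_sum]
      refine Finset.sum_congr rfl fun j _ => by ring
    have hDYW : ⟪fderiv ℝ Y q W, Y q⟫ = 0 := by rw [real_inner_comm]; exact hYY' q hq W
    rw [hDx q hq W, hDx q hq X']
    simp only [inner_add_left, inner_add_right, real_inner_smul_left, real_inner_smul_right,
      hY1 q hq, hYY' q hq, hDYW, mul_zero, add_zero, zero_add, mul_one, hDY]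
    have hA : q.1 ^ 2 + c ^ 2 ≠ 0 := (hden q.1).ne'
    have ht : r q ≠ 0 := (hrpos q).ne'
    have ht2 : r q * r q = q.1 ^ 2 + c ^ 2 := by rw [← sq]; exact hrsq q
    exact scalar_met_aux q.1 c (r q) _ W.1 X'.1 ht ht2
  -- inner products with the position vector
  have hxinner : ∀ q ∈ U, ∀ X', ⟪x q, fderiv ℝ x q X'⟫ = q.1 * X'.1 := by
    intro q hq X'
    have hx : x q = r q • Y q := rfl
    rw [hx, hDx q hq X']
    simp only [inner_add_right, real_inner_smul_left, real_inner_smul_right,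
      hY1 q hq, hYY' q hq, mul_zero, mul_one, add_zero]
    rw [mul_right_comm, div_mul_cancel₀ _ (hrpos q).ne']
  have hxx : ∀ q ∈ U, ⟪x q, x q⟫ = q.1 ^ 2 + c ^ 2 := by
    intro q hq
    have hx : x q = r q • Y q := rfl
    rw [hx]
    simp only [real_inner_smul_left, real_inner_smul_right, hY1 q hq, mul_one]
    rw [← sq]
    exact hrsq q
  -- injectivity
  have hinj : ∀ p ∈ U, Function.Injective (fderiv ℝ x p) := by
    intro p hp
    have hker : ∀ Z : ℝ × EuclideanSpace ℝ (Fin (n - 1)), fderiv ℝ x p Z = 0 → Z = 0 := by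
      intro Z hZ
      have h1 : ⟪Y p, fderiv ℝ x p Z⟫ = p.1 / r p * Z.1 := by
        rw [hDx p hp Z]
        simp only [inner_add_right, real_inner_smul_right, hY1 p hp, hYY' p hp,
          mul_zero, mul_one, add_zero]
      rw [hZ] at h1
      simp only [inner_zero_right] at h1
      have hZ1 : Z.1 = 0 := by
        have hne : p.1 / r p ≠ 0 := div_ne_zero (hspos p hp).ne' (hrpos p).ne'
        rcases mul_eq_zero.1 h1.symm with h | h
        · exact absurd h hne
        · exact h
      have h2 : fderiv ℝ Y p Z = 0 := by
        have := hDx p hp Z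
        rw [hZ, hZ1] at this
        simp only [mul_zero, zero_smul, zero_add] at this
        have := this.symm
        rcases smul_eq_zero.1 this with h | h
        · exact absurd h (hrpos p).ne'
        · exact h
      have h3 : (∑ j, Z.2 j • pdu Y j p) = 0 := by
        have := hdecomp p hp Z
        rw [h2, hZ1] at this
        simpa using this.symm
      have h4 : ∀ j, Z.2 j = 0 := by
        have hli := Fintype.linearIndependent_iff.1 (hind p hp)
        exact hli (fun j => Z.2 j) h3
      have hZ2 : Z.2 = 0 := by
        have := euclid_decomp_aux Z.2
        rw [this]
        simp [h4]
      exact Prod.ext hZ1 hZ2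
    intro X X' hXX
    have h0 : fderiv ℝ x p (X - X') = 0 := by rw [map_sub, hXX, sub_self]
    have := hker _ h0
    exact sub_eq_zero.1 this
  -- projection formula
  have hproj : ∀ p ∈ U, tangentProjP x p (x p) = p.1 • fderiv ℝ x p (1, 0) := by
    intro p hp
    unfold tangentProjP
    rw [← Submodule.starProjection_apply]
    apply Submodule.eq_starProjection_of_mem_of_inner_eq_zero
    · exact Submodule.smul_mem _ _ (LinearMap.mem_range_self _ _)
    · rintro w ⟨Z, rfl⟩
      simp only [ContinuousLinearMap.coe_coe]
      rw [inner_sub_left, real_inner_smul_left, hxinner p hp Z, hMet p hp (1, 0) Z]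
      simp
  -- rectifying
  -- the derivative of x is smooth on U
  have hfC : ContDiffOn ℝ (⊤ : ℕ∞) (fderiv ℝ x) U := hxC.fderiv_of_isOpen hU (by simp)
  have hrect : ∀ p ∈ U, ∀ X X' : ℝ × EuclideanSpace ℝ (Fin (n - 1)),
      ⟪x p, sffP x p X X'⟫ = 0 := by
    intro p hp X X'
    have hxd : DifferentiableAt ℝ x p := (hxD p hp).differentiableAt
    have hD2d : DifferentiableAt ℝ (fderiv ℝ x) p :=
      (hfC.contDiffAt (hU.mem_nhds hp)).differentiableAt (by simp)
    have hdW : ∀ W, DifferentiableAt ℝ (fun q => fderiv ℝ x q W) p := fun W =>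
      hD2d.clm_apply (differentiableAt_const W)
    have heval : ∀ Xd W, fderiv ℝ (fun q => fderiv ℝ x q W) p Xd
        = fderiv ℝ (fderiv ℝ x) p Xd W := fun Xd W => fderiv_eval_aux x p Xd W hD2d
    have hsym : ∀ A B, fderiv ℝ (fderiv ℝ x) p A B = fderiv ℝ (fderiv ℝ x) p B A :=
      (hxC.contDiffAt (hU.mem_nhds hp)).isSymmSndFDerivAt (by rw [minSmoothness_of_isRCLikeNormedField]; exact WithTop.coe_le_coe.2 (le_top : (2 : ℕ∞) ≤ ⊤))
    -- product rule for the metric coefficients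
    have hT : ∀ A B Xd, fderiv ℝ (fun q => ⟪fderiv ℝ x q A, fderiv ℝ x q B⟫) p Xd
        = ⟪fderiv ℝ (fderiv ℝ x) p Xd A, fderiv ℝ x p B⟫
          + ⟪fderiv ℝ x p A, fderiv ℝ (fderiv ℝ x) p Xd B⟫ := by
      intro A B Xd
      rw [fderiv_inner_apply (𝕜 := ℝ) (hdW A) (hdW B) Xd, heval, heval]
      ring_nf
    -- three instances of the metric-derivative computation
    have hT1 : ∀ B Xd, fderiv ℝ (fun q => ⟪fderiv ℝ x q (1, 0), fderiv ℝ x q B⟫) p Xd = 0 := by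
      intro B Xd
      have hev : (fun q => ⟪fderiv ℝ x q (1, 0), fderiv ℝ x q B⟫) =ᶠ[nhds p]
          fun _ => B.1 := by
        refine Filter.eventuallyEq_of_mem (hU.mem_nhds hp) fun q hq => ?_
        rw [hMet q hq (1, 0) B]
        norm_num
      rw [hev.fderiv_eq]
      simp
    have hT2 : ∀ A Xd, fderiv ℝ (fun q => ⟪fderiv ℝ x q A, fderiv ℝ x q (1, 0)⟫) p Xd = 0 := by
      intro A Xd
      have hev : (fun q => ⟪fderiv ℝ x q A, fderiv ℝ x q (1, 0)⟫) =ᶠ[nhds p]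
          fun _ => A.1 := by
        refine Filter.eventuallyEq_of_mem (hU.mem_nhds hp) fun q hq => ?_
        rw [hMet q hq A (1, 0)]
        norm_num
      rw [hev.fderiv_eq]
      simp
    -- the `s`-derivative of the metric coefficient
    set G : EuclideanSpace ℝ (Fin (n - 1)) → ℝ :=
      fun u => ∑ i, ∑ j, g i j u * X.2 i * X'.2 j with hGdef
    have hGd : DifferentiableAt ℝ G p.2 := by
      refine DifferentiableAt.fun_sum fun i _ => DifferentiableAt.fun_sum fun j _ => ?_
      exact ((((hg i j).contDiffAt (hV.mem_nhds hp.2)).differentiableAt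
        (by simp)).mul_const _).mul_const _
    have hT3 : fderiv ℝ (fun q => ⟪fderiv ℝ x q X, fderiv ℝ x q X'⟫) p (1, 0)
        = 2 * p.1 * G p.2 := by
      have hev : (fun q => ⟪fderiv ℝ x q X, fderiv ℝ x q X'⟫) =ᶠ[nhds p]
          fun q => X.1 * X'.1 + q.1 ^ 2 * G q.2 :=
        Filter.eventuallyEq_of_mem (hU.mem_nhds hp) fun q hq => hMet q hq X X'
      have hsqD : HasFDerivAt (fun q : ℝ × EuclideanSpace ℝ (Fin (n - 1)) => q.1 ^ 2)
          ((2 * p.1) • ContinuousLinearMap.fst ℝ ℝ _) p := by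
        have h2 : HasFDerivAt (fun q : ℝ × EuclideanSpace ℝ (Fin (n - 1)) => q.1 * q.1)
            (p.1 • ContinuousLinearMap.fst ℝ ℝ _ + p.1 • ContinuousLinearMap.fst ℝ ℝ _) p :=
          hasFDerivAt_fst.mul hasFDerivAt_fst
        rw [show (fun q : ℝ × EuclideanSpace ℝ (Fin (n - 1)) => q.1 ^ 2)
            = (fun q => q.1 * q.1) from by funext q; ring,
          show ((2 * p.1) • ContinuousLinearMap.fst ℝ ℝ (EuclideanSpace ℝ (Fin (n - 1))))
            = p.1 • ContinuousLinearMap.fst ℝ ℝ _ + p.1 • ContinuousLinearMap.fst ℝ ℝ _ from by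
              rw [two_mul, add_smul]]
        exact h2
      have hGD : HasFDerivAt (fun q : ℝ × EuclideanSpace ℝ (Fin (n - 1)) => G q.2)
          ((fderiv ℝ G p.2).comp (ContinuousLinearMap.snd ℝ ℝ _)) p :=
        hGd.hasFDerivAt.comp p hasFDerivAt_snd
      have hprod := (hsqD.fun_mul hGD).const_add (X.1 * X'.1)
      rw [hev.fderiv_eq, hprod.fderiv]
      simp
      ring
    -- the Koszul-style elimination
    set D2 := fderiv ℝ (fderiv ℝ x) p with hD2def
    have hE1 := (hT (1, 0) X' X).symm.trans (hT1 X' X)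
    have hE2 := (hT X (1, 0) X').symm.trans (hT2 X X')
    have hE3 := (hT X X' (1, 0)).symm.trans (hT3)
    have hsw1 : ⟪D2 X (1, 0), fderiv ℝ x p X'⟫ = ⟪D2 (1, 0) X, fderiv ℝ x p X'⟫ := by
      rw [hsym]
    have hsw2 : ⟪fderiv ℝ x p (1, 0), D2 X' X⟫ = ⟪fderiv ℝ x p (1, 0), D2 X X'⟫ := by
      rw [hsym]
    have hsw3 : ⟪D2 X' (1, 0), fderiv ℝ x p X⟫ = ⟪D2 (1, 0) X', fderiv ℝ x p X⟫ := by
      rw [hsym]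
    have hcm1 : ⟪D2 (1, 0) X, fderiv ℝ x p X'⟫ = ⟪fderiv ℝ x p X', D2 (1, 0) X⟫ :=
      real_inner_comm _ _
    have hcm2 : ⟪D2 X' X, fderiv ℝ x p (1, 0)⟫ = ⟪fderiv ℝ x p (1, 0), D2 X' X⟫ :=
      real_inner_comm _ _
    have hII : ⟪fderiv ℝ x p (1, 0), D2 X X'⟫ = -(p.1 * G p.2) := by
      rw [hsym X (1, 0)] at hE1
      rw [hcm2, hsym X' X, hsym X' (1, 0)] at hE2
      linarith [hE1, hE2, hE3]
    -- inner product of the position vector with the second derivative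
    have hI : ⟪x p, D2 X X'⟫ = -(p.1 ^ 2 * G p.2) := by
      have key := fderiv_inner_apply (𝕜 := ℝ) hxd (hdW X') X
      rw [heval X X'] at key
      have hev : (fun q => ⟪x q, fderiv ℝ x q X'⟫) =ᶠ[nhds p] fun q => q.1 * X'.1 :=
        Filter.eventuallyEq_of_mem (hU.mem_nhds hp) fun q hq => hxinner q hq X'
      have hlin : HasFDerivAt (fun q : ℝ × EuclideanSpace ℝ (Fin (n - 1)) => q.1 * X'.1)
          (X'.1 • ContinuousLinearMap.fst ℝ ℝ _) p := by
        simpa using hasFDerivAt_fst.mul_const X'.1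
      rw [hev.fderiv_eq, hlin.fderiv] at key
      rw [hMet p hp X X'] at key
      have hGG : (∑ i, ∑ j, g i j p.2 * X.2 i * X'.2 j) = G p.2 := rfl
      rw [hGG] at key
      simp only [ContinuousLinearMap.smul_apply, ContinuousLinearMap.coe_fst',
        smul_eq_mul] at key
      linarith [key]
    -- conclusion
    have hlr := Submodule.inner_starProjection_left_eq_right
      (LinearMap.range (fderiv ℝ x p : ℝ × EuclideanSpace ℝ (Fin (n - 1)) →ₗ[ℝ] EuclideanSpace ℝ (Fin m))) (x p) (fderiv ℝ (fderiv ℝ x) p X X')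
    have hPs : ⟪x p, tangentProjP x p (fderiv ℝ (fderiv ℝ x) p X X')⟫
        = -(p.1 ^ 2 * G p.2) := by
      have h1 : ⟪x p, tangentProjP x p (fderiv ℝ (fderiv ℝ x) p X X')⟫
          = ⟪tangentProjP x p (x p), fderiv ℝ (fderiv ℝ x) p X X'⟫ := hlr.symm
      rw [h1, hproj p hp, real_inner_smul_left, hII]
      ring
    show ⟪x p, fderiv ℝ (fderiv ℝ x) p X X'
      - tangentProjP x p (fderiv ℝ (fderiv ℝ x) p X X')⟫ = 0
    rw [inner_sub_right, hPs]
    rw [show fderiv ℝ (fderiv ℝ x) p X X' = D2 X X' from rfl, hI]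
    ring
  have hTN : ∀ p ∈ U, tangentProjP x p (x p) ≠ 0 ∧ x p - tangentProjP x p (x p) ≠ 0 := by
    intro p hp
    rw [hproj p hp]
    have hDD : ⟪fderiv ℝ x p (1, 0), fderiv ℝ x p (1, 0)⟫ = 1 := by
      rw [hMet p hp (1, 0) (1, 0)]; simp
    constructor
    · have hv : fderiv ℝ x p (1, 0) ≠ 0 := by
        intro h
        rw [h, inner_zero_left] at hDD
        norm_num at hDD
      exact smul_ne_zero (hspos p hp).ne' hv
    · have hNN : ⟪x p - p.1 • fderiv ℝ x p (1, 0), x p - p.1 • fderiv ℝ x p (1, 0)⟫ = c ^ 2 := by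
        have hcomm : ⟪fderiv ℝ x p (1, 0), x p⟫ = p.1 * 1 := by
          rw [real_inner_comm]; exact hxinner p hp (1, 0)
        simp only [inner_sub_left, inner_sub_right, real_inner_smul_left,
          real_inner_smul_right, hxx p hp, hxinner p hp (1, 0), hDD, hcomm]
        ring
      intro h
      rw [h, inner_zero_left] at hNN
      exact absurd hNN.symm (by positivity)
  exact ⟨hxC, hinj, hrect, hTN⟩
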